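/- arXiv:0904.1036 — 3 statements merged into one kernel-verified Lean document; each statement's English description precedes it below -/
import Mathlib

section
/- Under hypothesis (H3), any weak* accumulation point ν of the sequence (ν_n) satisfies ν(A) = ν(sat(A)) for every Borel set A ⊆ X, where sat(A) := h⁻¹(h(A)) is the saturation of A. -/
open MeasureTheory Filter Topology Set
open scoped ENNReal NNReal

namespace Samva

variable {X : Type*}

/-- The `n`-th iterate (`n : ℤ`) of a homeomorphism. -/
noncomputable def zIter [TopologicalSpace X] (f : X ≃ₜ X) : ℤ → X → X
  | Int.ofNat n => (f : X → X)^[n]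
  | Int.negSucc n => (f.symm : X → X)^[n + 1]

/-- `f` is expansive with expansivity constant `α`. -/
def IsExpansiveWith [PseudoMetricSpace X] (f : X ≃ₜ X) (α : ℝ) : Prop :=
  0 < α ∧ ∀ x y : X, (∀ n : ℤ, dist (zIter f n x) (zIter f n y) ≤ α) → x = y

/-- `f` is expansive. -/
def IsExpansive [PseudoMetricSpace X] (f : X ≃ₜ X) : Prop :=
  ∃ α : ℝ, IsExpansiveWith f α

/-- The (periodic) specification property. -/
def HasSpecification [PseudoMetricSpace X] (f : X ≃ₜ X) : Prop :=
  ∀ ε : ℝ, 0 < ε → ∃ M : ℕ, ∀ (k : ℕ) (x : Fin (k + 1) → X) (a b : Fin (k + 1) → ℤ),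
    (∀ i, a i ≤ b i) →
    (∀ i : Fin k, (M : ℤ) ≤ a i.succ - b i.castSucc) →
    ∀ p : ℤ, (M : ℤ) + b (Fin.last k) - a 0 ≤ p →
      ∃ z : X, zIter f p z = z ∧
        ∀ i, ∀ j : ℤ, a i ≤ j → j ≤ b i → dist (zIter f j z) (zIter f j (x i)) ≤ ε

/-- The set of `n`-periodic points. -/
def perSet (f : X → X) (n : ℕ) : Set X := {x | f^[n] x = x}

/-- The uniform (equidistributed) probability measure on the `n`-periodic points of `f`,
`μ_n = |Per_n(f)|⁻¹ ∑_{x ∈ Per_n(f)} δ_x`. -/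
noncomputable def perMeasure [MeasurableSpace X] (f : X → X) (n : ℕ) : Measure X :=
  ProbabilityTheory.uniformOn (perSet f n)

/-- The uniform probability measure on a set `s`,
`|s|⁻¹ ∑_{x ∈ s} δ_x`. -/
noncomputable def unifMeasure [MeasurableSpace X] (s : Set X) : Measure X :=
  ProbabilityTheory.uniformOn s

/-- Weak* convergence of a sequence of measures against continuous test functions. -/
def WeakLimit [TopologicalSpace X] [MeasurableSpace X] (μs : ℕ → Measure X) (ν : Measure X) :
    Prop :=
  ∀ φ : C(X, ℝ), Tendsto (fun n => ∫ x, φ x ∂(μs n)) atTop (𝓝 (∫ x, φ x ∂ν))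

/-- `ν` is a weak* accumulation point of the sequence `μs`. -/
def WeakClusterPt [TopologicalSpace X] [MeasurableSpace X] (μs : ℕ → Measure X)
    (ν : Measure X) : Prop :=
  ∃ u : ℕ → ℕ, StrictMono u ∧ WeakLimit (μs ∘ u) ν

/-- `E` is `(n,ε)`-separated for `g`. -/
def IsSep [PseudoMetricSpace X] (g : X → X) (n : ℕ) (ε : ℝ) (E : Set X) : Prop :=
  E.Pairwise fun x y => ∃ j < n, ε < dist (g^[j] x) (g^[j] y)

/-- Maximal cardinality of an `(n,ε)`-separated subset of `K` for `g`. -/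
noncomputable def sepCard [PseudoMetricSpace X] (g : X → X) (K : Set X) (n : ℕ) (ε : ℝ) :
    ℝ≥0∞ :=
  ⨆ (E : Finset X) (_ : ↑E ⊆ K ∧ IsSep g n ε ↑E), (E.card : ℝ≥0∞)

/-- Topological entropy of `g` relative to the set `K`:
`h_top(g,K) = lim_{ε→0} limsup_n (1/n) log E_K(n,ε)`; since the inner quantity is
monotone in `ε`, the limit as `ε → 0` is the supremum over `ε > 0`. -/
noncomputable def relEntropy [PseudoMetricSpace X] (g : X → X) (K : Set X) : EReal :=
  ⨆ (ε : ℝ) (_ : 0 < ε),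
    Filter.limsup (fun n : ℕ => ENNReal.log (sepCard g K n ε) / (n : EReal)) atTop

/-- Topological entropy of `g`. -/
noncomputable def topEntropy [PseudoMetricSpace X] (g : X → X) : EReal :=
  relEntropy g Set.univ

/-- A finite measurable partition of `X`. -/
def IsMPartition [MeasurableSpace X] (P : Finset (Set X)) : Prop :=
  (∀ A ∈ P, MeasurableSet A) ∧ ((P : Set (Set X)).PairwiseDisjoint id) ∧
    ⋃₀ (P : Set (Set X)) = Set.univ

/-- The entropy `H_μ(P ∨ g⁻¹P ∨ ⋯ ∨ g^{-(n-1)}P)` of the `n`-th dynamical refinement of the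
partition `P`. -/
noncomputable def dynH [MeasurableSpace X] (μ : Measure X) (g : X → X) (P : Finset (Set X))
    (n : ℕ) : ℝ :=
  ∑ A : Fin n → ↥P, Real.negMulLog (μ (⋂ i : Fin n, g^[i.1] ⁻¹' ((A i : Set X)))).toReal

/-- The measure-theoretic (Kolmogorov–Sinai) entropy `h_μ(g)`, using that for invariant `μ`
the limit `lim_n H_n/n` equals `inf_n H_n/n` by subadditivity. -/
noncomputable def mEntropy [MeasurableSpace X] (g : X → X) (μ : Measure X) : EReal :=
  ⨆ P : {P : Finset (Set X) // IsMPartition P},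
    ⨅ n : ℕ, ((dynH μ g (P : Finset (Set X)) (n + 1) / (n + 1) : ℝ) : EReal)

section Hyp

variable [MetricSpace X] [CompactSpace X] [MeasurableSpace X] [BorelSpace X]

/-- Hypothesis (H1): every class `[x] = h⁻¹(h x)` has zero relative topological entropy. -/
def HypH1 (g h : X → X) : Prop :=
  ∀ x : X, relEntropy g (h ⁻¹' {h x}) = 0

/-- Hypothesis (H2): every periodic class contains a `g`-periodic point whose `g`-period is
the `f`-period of `h x`. -/
def HypH2 (f g h : X → X) : Prop :=
  ∀ x : X, h x ∈ Function.periodicPts f →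
    ∃ y : X, h y = h x ∧ Function.minimalPeriod g y = Function.minimalPeriod f (h x)

/-- Hypothesis (H3): the set of points whose class is trivial has full Bowen measure. -/
def HypH3 (h : X → X) (μ : Measure X) : Prop :=
  μ {y : X | ∃ x : X, h ⁻¹' {y} = {x}} = 1

/-- `P` is an admissible choice of the sets `P̃er_n(g)`: `P n` consists of `g`-periodic points
of period `n` lying over `Per_n(f)`, and `h` maps `P n` bijectively onto `Per_n(f)`. -/
def IsPerSelection (f g h : X → X) (P : ℕ → Set X) : Prop :=
  ∀ n : ℕ, P n ⊆ perSet g n ∧ (∀ x ∈ P n, g x ∈ P n) ∧ Set.BijOn h (P n) (perSet f n)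

end Hyp

end Samva

open Samva

/-!
The Bowen measure `μ` is the weak* limit of the `μ_n`, and `h` pushes `ν_n` forward to `μ_n`
because it maps `P̃er_n(g)` bijectively onto `Per_n(f)`. Passing to the limit along the
subsequence defining `ν` gives `h_* ν = μ`. The saturation of `A` differs from `A` only inside
the preimage of the set of points whose fiber under `h` has two or more points; by (H3) that set
is `μ`-null, hence its preimage is `ν`-null.
-/

namespace ProbabilityTheory

variable {X Y : Type*} [MeasurableSpace X] [MeasurableSpace Y]

lemma map_uniformOn_of_injOn [MeasurableSingletonClass X] [MeasurableSingletonClass Y]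
    {h : X → Y} (hh : Measurable h) {s : Set X} (hinj : InjOn h s) :
    Measure.map h (uniformOn s) = uniformOn (h '' s) := by
  by_cases hs : s.Finite
  · have hcount : ∀ t ⊆ s, Measure.count (h '' t) = Measure.count t := fun t ht => by
      rw [Measure.count_apply ((hs.subset ht).image h).measurableSet,
        Measure.count_apply (hs.subset ht).measurableSet, (hinj.mono ht).encard_image]
    ext B hB
    rw [Measure.map_apply hh hB, uniformOn, uniformOn, cond_apply hs.measurableSet,
      cond_apply (hs.image h).measurableSet, ← image_inter_preimage h s B, hcount s subset_rfl,
      hcount _ inter_subset_left]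
  -- `uniformOn` of an infinite set is the zero measure
  · have hs' : (h '' s).Infinite := (infinite_image_iff hinj).mpr hs
    rw [uniformOn_eq_zero.mpr (Or.inl hs), uniformOn_eq_zero.mpr (Or.inl hs'), Measure.map_zero]

end ProbabilityTheory

namespace Samva

namespace WeakLimit

variable {X Y : Type*} [TopologicalSpace X] [MeasurableSpace X] {μs : ℕ → Measure X}
  {ν : Measure X}

lemma comp {u : ℕ → ℕ} (hν : WeakLimit μs ν) (hu : Tendsto u atTop atTop) :
    WeakLimit (μs ∘ u) ν :=
  fun φ => (hν φ).comp hu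

lemma map [OpensMeasurableSpace X] [TopologicalSpace Y] [MeasurableSpace Y] [BorelSpace Y]
    (hν : WeakLimit μs ν) {h : X → Y} (hh : Continuous h) :
    WeakLimit (fun n => Measure.map h (μs n)) (Measure.map h ν) := by
  intro φ
  simp only [integral_map hh.aemeasurable φ.continuous.aestronglyMeasurable]
  exact hν (φ.comp ⟨h, hh⟩)

lemma unique [HasOuterApproxClosed X] [BorelSpace X] {ν' : Measure X} [IsProbabilityMeasure ν']
    (hν : WeakLimit μs ν) (hν' : WeakLimit μs ν') : ν = ν' := by
  have hint : ∀ φ : C(X, ℝ), ∫ x, φ x ∂ν = ∫ x, φ x ∂ν' :=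
    fun φ => tendsto_nhds_unique (hν φ) (hν' φ)
  have : IsProbabilityMeasure ν := by
    have h1 := hint (ContinuousMap.const X 1)
    simp only [ContinuousMap.const_apply, integral_const, smul_eq_mul, mul_one,
      measureReal_def, measure_univ, ENNReal.toReal_one] at h1
    exact ⟨(ENNReal.toReal_eq_one_iff _).mp h1⟩
  exact ext_of_forall_integral_eq_of_IsFiniteMeasure fun φ => hint φ.toContinuousMap

end WeakLimit

section Fibers

variable {X Y : Type*}

def nontrivialFibers (h : X → Y) : Set Y := {y | (h ⁻¹' {y}).Nontrivial}

lemma preimage_image_subset_union_preimage_nontrivialFibers (h : X → Y) (A : Set X) :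
    h ⁻¹' (h '' A) ⊆ A ∪ h ⁻¹' nontrivialFibers h := by
  rintro x ⟨a, haA, hax⟩
  by_cases hxa : x = a
  · exact Or.inl (hxa ▸ haA)
  · exact Or.inr ⟨a, hax, x, rfl, Ne.symm hxa⟩

lemma measure_preimage_image_eq_of_null [MeasurableSpace X] {ν : Measure X} {h : X → Y}
    (hnull : ν (h ⁻¹' nontrivialFibers h) = 0) (A : Set X) : ν (h ⁻¹' (h '' A)) = ν A := by
  refine le_antisymm ?_ (measure_mono (subset_preimage_image h A))
  calc ν (h ⁻¹' (h '' A)) ≤ ν (A ∪ h ⁻¹' nontrivialFibers h) :=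
        measure_mono (preimage_image_subset_union_preimage_nontrivialFibers h A)
    _ ≤ ν A + ν (h ⁻¹' nontrivialFibers h) := measure_union_le _ _
    _ = ν A := by rw [hnull, add_zero]

lemma nontrivialFibers_eq_iUnion [MetricSpace X] (h : X → Y) :
    nontrivialFibers h = ⋃ k : ℕ, (fun p : X × X => h p.1) ''
      {p | h p.1 = h p.2 ∧ 1 / ((k : ℝ) + 1) ≤ dist p.1 p.2} := by
  ext y
  simp only [mem_iUnion, mem_image]
  constructor
  · rintro ⟨a, rfl, b, hb, hab⟩
    obtain ⟨k, hk⟩ := exists_nat_one_div_lt (dist_pos.mpr hab)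
    exact ⟨k, (a, b), ⟨hb.symm, hk.le⟩, rfl⟩
  · rintro ⟨k, ⟨a, b⟩, ⟨hab, hk⟩, rfl⟩
    refine ⟨a, rfl, b, hab.symm, fun e => ?_⟩
    subst e
    rw [dist_self] at hk
    exact absurd hk (not_le.mpr (by positivity))

lemma measurableSet_nontrivialFibers [MetricSpace X] [CompactSpace X] [TopologicalSpace Y]
    [T2Space Y] [MeasurableSpace Y] [OpensMeasurableSpace Y] {h : X → Y} (hh : Continuous h) :
    MeasurableSet (nontrivialFibers h) := by
  rw [nontrivialFibers_eq_iUnion]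
  refine .iUnion fun k => (IsClosed.isCompact ?_).image (hh.comp continuous_fst) |>.measurableSet
  exact (isClosed_eq (hh.comp continuous_fst) (hh.comp continuous_snd)).inter
    (isClosed_le continuous_const (continuous_fst.dist continuous_snd))

lemma measure_nontrivialFibers_eq_zero [MetricSpace X] [CompactSpace X] [MeasurableSpace X]
    [BorelSpace X] {h : X → X} (hh : Continuous h) {μ : Measure X} [IsProbabilityMeasure μ]
    (H3 : HypH3 h μ) : μ (nontrivialFibers h) = 0 := by
  have htriv : {y | ∃ x, h ⁻¹' {y} = {x}} ⊆ (nontrivialFibers h)ᶜ := by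
    rintro y ⟨x, hx⟩ hy
    exact not_nontrivial_singleton (hx ▸ hy : ({x} : Set X).Nontrivial)
  rw [← compl_compl (nontrivialFibers h), prob_compl_eq_zero_iff
    (measurableSet_nontrivialFibers hh).compl]
  exact le_antisymm prob_le_one (H3 ▸ measure_mono htriv)

end Fibers

end Samva

theorem measure_of_saturation_general
    {X : Type*} [MetricSpace X] [CompactSpace X] [MeasurableSpace X] [BorelSpace X]
    (f g : X ≃ₜ X) (h : X → X) (hcont : Continuous h)
    (μ : Measure X) (hμprob : IsProbabilityMeasure μ)
    (hμ : WeakLimit (perMeasure (⇑f)) μ)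
    (H3 : HypH3 h μ)
    (P : ℕ → Set X) (hP : IsPerSelection (⇑f) (⇑g) h P)
 :
    ∀ ν : Measure X, WeakClusterPt (fun n => unifMeasure (P n)) ν →
      ∀ A : Set X, MeasurableSet A → ν A = ν (h ⁻¹' (h '' A)) := by
  rintro ν ⟨u, hu, hν⟩ A -
  have : IsProbabilityMeasure μ := hμprob
  have hpush : (fun n => Measure.map h (unifMeasure (P (u n)))) = perMeasure (⇑f) ∘ u := by
    funext n
    rw [Function.comp_apply, unifMeasure, perMeasure,
      ProbabilityTheory.map_uniformOn_of_injOn hcont.measurable (hP (u n)).2.2.injOn,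
      (hP (u n)).2.2.image_eq]
  have hmap : Measure.map h ν = μ :=
    WeakLimit.unique (hν.map hcont) (hpush ▸ hμ.comp hu.tendsto_atTop)
  refine (measure_preimage_image_eq_of_null (nonpos_iff_eq_zero.mp ?_) A).symm
  calc ν (h ⁻¹' nontrivialFibers h) ≤ Measure.map h ν (nontrivialFibers h) :=
        Measure.le_map_apply hcont.aemeasurable _
    _ = 0 := by rw [hmap, measure_nontrivialFibers_eq_zero hcont H3]

/-- Under (H3), any weak* accumulation point `ν` of `(ν_n)` gives the same measure to every
Borel set `A` and to its saturation `sat(A) = h⁻¹(h(A))`. -/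
theorem measure_of_saturation
    {X : Type*} [MetricSpace X] [CompactSpace X] [MeasurableSpace X] [BorelSpace X]
    (f g : X ≃ₜ X) (h : X → X) (hcont : Continuous h) (hsurj : Function.Surjective h)
    (hsemi : ∀ x : X, f (h x) = h (g x))
    (hexp : IsExpansive f) (hspec : HasSpecification f)
    (μ : Measure X) (hμprob : IsProbabilityMeasure μ)
    (hμ : WeakLimit (perMeasure (⇑f)) μ)
    (H2 : HypH2 (⇑f) (⇑g) h) (H3 : HypH3 h μ)
    (P : ℕ → Set X) (hP : IsPerSelection (⇑f) (⇑g) h P)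
 :
    ∀ ν : Measure X, WeakClusterPt (fun n => unifMeasure (P n)) ν →
      ∀ A : Set X, MeasurableSet A → ν A = ν (h ⁻¹' (h '' A)) :=
  measure_of_saturation_general f g h hcont μ hμprob hμ H3 P hP
end

section
/- Every r-pseudo orbit (x_n)_{n∈ℤ} for A is r/(1−a)-shadowed by a unique true orbit: there exists a unique point y ∈ ℝ^N such that ‖A^n y − x_n‖ ≤ r/(1−a) for all n ∈ ℤ. -/
open MeasureTheory Filter Topology Set
open scoped ENNReal NNReal

open Samva

/-!
With the defect `e n = A (x n) - x (n + 1)`, a point `y` shadows `x` exactly when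
`z n = (A ^ n) y - x n` is a bounded solution of `z (n + 1) = A (z n) + e n`. Bounded solutions
are the fixed points of the operator on `ℤ →ᵇ V` that solves the stable component forward and the
unstable one backward,
`Φ z n = Ps (A (z (n - 1)) + e (n - 1)) + Pu (A⁻¹ (z (n + 1) - e n))`.
In the adapted max norm `Φ` is an `a`-contraction, so it has exactly one fixed point, and its norm
is at most `‖Φ 0‖ / (1 - a) ≤ r / (1 - a)`.
-/

section

open Function BoundedContinuousFunction

namespace ContinuousLinearEquiv

variable {R M : Type*} [Ring R] [TopologicalSpace M] [AddCommGroup M] [Module R M]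

theorem zpow_add_one_apply (A : M ≃L[R] M) (n : ℤ) (v : M) :
    (A ^ (n + 1)) v = A ((A ^ n) v) := by
  rw [add_comm, zpow_add, zpow_one]; rfl

theorem eq_zpow_apply_of_forall_add_one {A : M ≃L[R] M} {w : ℤ → M}
    (hw : ∀ n, w (n + 1) = A (w n)) (n : ℤ) : w n = (A ^ n) (w 0) := by
  induction n using Int.induction_on with
  | zero => rw [zpow_zero]; rfl
  | succ i ih => rw [hw, ih, zpow_add_one_apply]
  | pred i ih =>
    apply A.injective
    rw [← hw, ← zpow_add_one_apply, sub_add_cancel, ih]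

theorem forall_zpow_apply_sub_eq_iff {A : M ≃L[R] M} {x z : ℤ → M} {y : M} :
    (∀ n, (A ^ n) y - x n = z n) ↔
      (∀ n, z (n + 1) = A (z n) + (A (x n) - x (n + 1))) ∧ y = x 0 + z 0 := by
  constructor
  · intro hz
    refine ⟨fun n => ?_, ?_⟩
    · rw [← hz, ← hz, zpow_add_one_apply, map_sub]; abel
    · rw [← hz, zpow_zero]; exact (add_sub_cancel _ _).symm
  · rintro ⟨hz, rfl⟩ n
    have horbit : ∀ n, x (n + 1) + z (n + 1) = A (x n + z n) := fun n => by
      rw [hz, map_add]; abel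
    rw [← eq_zpow_apply_of_forall_add_one (w := fun n => x n + z n) horbit, add_sub_cancel_left]

end ContinuousLinearEquiv

variable {V : Type*} [NormedAddCommGroup V] [NormedSpace ℝ V]

structure IsAdaptedHyperbolicSplitting (A : V ≃L[ℝ] V) (Ps Pu : V →L[ℝ] V) (a : ℝ) : Prop where
  stable_idem : ∀ x, Ps (Ps x) = Ps x
  stable_add_unstable : ∀ x, Ps x + Pu x = x
  map_stable : ∀ x, A (Ps x) = Ps (A x)
  map_unstable : ∀ x, A (Pu x) = Pu (A x)
  norm_eq_max : ∀ x, ‖x‖ = max ‖Ps x‖ ‖Pu x‖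
  norm_map_stable_le : ∀ x, ‖A (Ps x)‖ ≤ a * ‖Ps x‖
  norm_symm_unstable_le : ∀ x, ‖A.symm (Pu x)‖ ≤ a * ‖Pu x‖

namespace IsAdaptedHyperbolicSplitting

variable {A : V ≃L[ℝ] V} {Ps Pu : V →L[ℝ] V} {a : ℝ}

theorem unstable_eq_sub (h : IsAdaptedHyperbolicSplitting A Ps Pu a) (v : V) : Pu v = v - Ps v :=
  eq_sub_of_add_eq' (h.stable_add_unstable v)

theorem stable_proj_add (h : IsAdaptedHyperbolicSplitting A Ps Pu a) (v w : V) :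
    Ps (Ps v + Pu w) = Ps v := by
  rw [map_add, h.stable_idem, h.unstable_eq_sub, map_sub, h.stable_idem, sub_self, add_zero]

theorem unstable_proj_add (h : IsAdaptedHyperbolicSplitting A Ps Pu a) (v w : V) :
    Pu (Ps v + Pu w) = Pu w := by
  rw [h.unstable_eq_sub, h.stable_proj_add, add_sub_cancel_left]

theorem norm_proj_add (h : IsAdaptedHyperbolicSplitting A Ps Pu a) (v w : V) :
    ‖Ps v + Pu w‖ = max ‖Ps v‖ ‖Pu w‖ := by
  rw [h.norm_eq_max, h.stable_proj_add, h.unstable_proj_add]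

theorem symm_unstable (h : IsAdaptedHyperbolicSplitting A Ps Pu a) (v : V) :
    A.symm (Pu v) = Pu (A.symm v) :=
  A.injective <| by rw [A.apply_symm_apply, h.map_unstable, A.apply_symm_apply]

theorem norm_stable_le (h : IsAdaptedHyperbolicSplitting A Ps Pu a) (v : V) : ‖Ps v‖ ≤ ‖v‖ :=
  h.norm_eq_max v ▸ le_max_left _ _

theorem norm_unstable_le (h : IsAdaptedHyperbolicSplitting A Ps Pu a) (v : V) : ‖Pu v‖ ≤ ‖v‖ :=
  h.norm_eq_max v ▸ le_max_right _ _

theorem norm_stable_map_le (h : IsAdaptedHyperbolicSplitting A Ps Pu a) (ha : 0 ≤ a) (v : V) :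
    ‖Ps (A v)‖ ≤ a * ‖v‖ := by
  rw [← h.map_stable]
  exact (h.norm_map_stable_le v).trans (mul_le_mul_of_nonneg_left (h.norm_stable_le v) ha)

theorem norm_unstable_symm_le (h : IsAdaptedHyperbolicSplitting A Ps Pu a) (ha : 0 ≤ a) (v : V) :
    ‖Pu (A.symm v)‖ ≤ a * ‖v‖ := by
  rw [← h.symm_unstable]
  exact (h.norm_symm_unstable_le v).trans (mul_le_mul_of_nonneg_left (h.norm_unstable_le v) ha)

end IsAdaptedHyperbolicSplitting

noncomputable def shadowingOperator (A : V ≃L[ℝ] V) (Ps Pu : V →L[ℝ] V) (e z : ℤ →ᵇ V) :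
    ℤ →ᵇ V :=
  .ofNormedAddCommGroupDiscrete
    (fun n => Ps (A (z (n - 1)) + e (n - 1)) + Pu (A.symm (z (n + 1) - e n)))
    (‖Ps‖ * (‖(A : V →L[ℝ] V)‖ * ‖z‖ + ‖e‖) + ‖Pu‖ * (‖(A.symm : V →L[ℝ] V)‖ * (‖z‖ + ‖e‖)))
    fun n => by
      have hz := z.norm_coe_le_norm
      have he := e.norm_coe_le_norm
      calc _ ≤ ‖Ps‖ * ‖A (z (n - 1)) + e (n - 1)‖ + ‖Pu‖ * ‖A.symm (z (n + 1) - e n)‖ :=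
            (norm_add_le _ _).trans (add_le_add (Ps.le_opNorm _) (Pu.le_opNorm _))
        _ ≤ _ := by
          gcongr
          · exact (norm_add_le _ _).trans (add_le_add (((A : V →L[ℝ] V).le_opNorm _).trans
              (by gcongr; exact hz _)) (he _))
          · exact ((A.symm : V →L[ℝ] V).le_opNorm _).trans
              (by gcongr; exact (norm_sub_le _ _).trans (add_le_add (hz _) (he _)))

theorem shadowingOperator_apply (A : V ≃L[ℝ] V) (Ps Pu : V →L[ℝ] V) (e z : ℤ →ᵇ V) (n : ℤ) :
    shadowingOperator A Ps Pu e z n =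
      Ps (A (z (n - 1)) + e (n - 1)) + Pu (A.symm (z (n + 1) - e n)) := rfl

namespace IsAdaptedHyperbolicSplitting

variable {A : V ≃L[ℝ] V} {Ps Pu : V →L[ℝ] V} {a : ℝ}

theorem isFixedPt_shadowingOperator_iff (h : IsAdaptedHyperbolicSplitting A Ps Pu a)
    {e z : ℤ →ᵇ V} :
    IsFixedPt (shadowingOperator A Ps Pu e) z ↔ ∀ n, z (n + 1) = A (z n) + e n := by
  simp only [IsFixedPt, BoundedContinuousFunction.ext_iff, shadowingOperator_apply]
  constructor
  · intro hz n
    have hs : Ps (z (n + 1)) = Ps (A (z n) + e n) := by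
      simpa only [add_sub_cancel_right] using
        (congrArg Ps (hz (n + 1))).symm.trans (h.stable_proj_add _ _)
    have hu : Pu (z n) = Pu (A.symm (z (n + 1) - e n)) :=
      (congrArg Pu (hz n)).symm.trans (h.unstable_proj_add _ _)
    calc z (n + 1) = Ps (z (n + 1)) + Pu (z (n + 1)) := (h.stable_add_unstable _).symm
      _ = Ps (A (z n) + e n) + Pu (A (z n) + e n) := by
        rw [hs, map_add Pu, ← h.map_unstable, hu, ← h.symm_unstable, A.apply_symm_apply, map_sub,
          sub_add_cancel]
      _ = A (z n) + e n := h.stable_add_unstable _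
  · intro hz n
    rw [← hz (n - 1), sub_add_cancel, hz n, add_sub_cancel_right, A.symm_apply_apply,
      h.stable_add_unstable]

theorem contractingWith_shadowingOperator (h : IsAdaptedHyperbolicSplitting A Ps Pu a)
    (ha0 : 0 ≤ a) (ha1 : a < 1) (e : ℤ →ᵇ V) :
    ContractingWith ⟨a, ha0⟩ (shadowingOperator A Ps Pu e) := by
  refine ⟨ha1, LipschitzWith.of_dist_le_mul fun z z' => (dist_le (by positivity)).2 fun n => ?_⟩
  have hd : ∀ m, ‖z m - z' m‖ ≤ dist z z' := fun m => by
    rw [← dist_eq_norm]; exact dist_coe_le_dist m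
  calc dist (shadowingOperator A Ps Pu e z n) (shadowingOperator A Ps Pu e z' n)
      = ‖Ps (A (z (n - 1) - z' (n - 1))) + Pu (A.symm (z (n + 1) - z' (n + 1)))‖ := by
        rw [dist_eq_norm, shadowingOperator_apply, shadowingOperator_apply]
        simp only [map_sub, map_add]; congr 1; abel
    _ = max ‖Ps (A (z (n - 1) - z' (n - 1)))‖ ‖Pu (A.symm (z (n + 1) - z' (n + 1)))‖ :=
        h.norm_proj_add _ _
    _ ≤ a * dist z z' := max_le
        ((h.norm_stable_map_le ha0 _).trans (mul_le_mul_of_nonneg_left (hd _) ha0))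
        ((h.norm_unstable_symm_le ha0 _).trans (mul_le_mul_of_nonneg_left (hd _) ha0))

theorem norm_shadowingOperator_zero_le (h : IsAdaptedHyperbolicSplitting A Ps Pu a)
    (ha0 : 0 ≤ a) (ha1 : a ≤ 1) (e : ℤ →ᵇ V) : ‖shadowingOperator A Ps Pu e 0‖ ≤ ‖e‖ := by
  refine (norm_le (norm_nonneg e)).2 fun n => ?_
  simp only [shadowingOperator_apply, coe_zero, Pi.zero_apply, map_zero, zero_add, zero_sub]
  rw [h.norm_proj_add]
  exact max_le ((h.norm_stable_le _).trans (e.norm_coe_le_norm _))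
    ((h.norm_unstable_symm_le ha0 _).trans <| (mul_le_of_le_one_left (norm_nonneg _) ha1).trans <|
      by rw [norm_neg]; exact e.norm_coe_le_norm n)

theorem norm_fixedPoint_shadowingOperator_le [CompleteSpace V]
    (h : IsAdaptedHyperbolicSplitting A Ps Pu a) (ha0 : 0 ≤ a) (ha1 : a < 1) (e : ℤ →ᵇ V) :
    ‖ContractingWith.fixedPoint _ (h.contractingWith_shadowingOperator ha0 ha1 e)‖ ≤
      ‖e‖ / (1 - a) := by
  have hΦ := h.contractingWith_shadowingOperator ha0 ha1 e
  calc _ = dist 0 (ContractingWith.fixedPoint _ hΦ) := (dist_zero_left _).symm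
    _ ≤ dist 0 (shadowingOperator A Ps Pu e 0) / (1 - a) := hΦ.dist_fixedPoint_le 0
    _ ≤ ‖e‖ / (1 - a) := by
      rw [dist_zero_left]
      exact div_le_div_of_nonneg_right (h.norm_shadowingOperator_zero_le ha0 ha1.le e)
        (sub_nonneg.2 ha1.le)

end IsAdaptedHyperbolicSplitting

end

theorem shadowing_lemma_general
    {V : Type*} [NormedAddCommGroup V] [NormedSpace ℝ V] [FiniteDimensional ℝ V]
    (A : V ≃L[ℝ] V) (Ps Pu : V →L[ℝ] V) (a : ℝ) (ha0 : 0 < a) (ha1 : a < 1)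
    (hPs : ∀ x : V, Ps (Ps x) = Ps x)
    (hsum : ∀ x : V, Ps x + Pu x = x)
    (hAPs : ∀ x : V, A (Ps x) = Ps (A x)) (hAPu : ∀ x : V, A (Pu x) = Pu (A x))
    (hnorm : ∀ x : V, ‖x‖ = max ‖Ps x‖ ‖Pu x‖)
    (hcontr : ∀ x : V, ‖A (Ps x)‖ ≤ a * ‖Ps x‖)
    (hexpd : ∀ x : V, ‖A.symm (Pu x)‖ ≤ a * ‖Pu x‖)
    (r : ℝ) (x : ℤ → V) (hx : ∀ n : ℤ, ‖A (x n) - x (n + 1)‖ ≤ r) :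
    ∃! y : V, ∀ n : ℤ, ‖(A ^ n) y - x n‖ ≤ r / (1 - a) := by
  have := FiniteDimensional.complete ℝ V
  have h : IsAdaptedHyperbolicSplitting A Ps Pu a :=
    ⟨hPs, hsum, hAPs, hAPu, hnorm, hcontr, hexpd⟩
  let e : BoundedContinuousFunction ℤ V :=
    .ofNormedAddCommGroupDiscrete (fun n => A (x n) - x (n + 1)) r hx
  have he : ‖e‖ ≤ r :=
    BoundedContinuousFunction.norm_ofNormedAddCommGroup_le _ ((norm_nonneg _).trans (hx 0)) hx
  have hΦ := h.contractingWith_shadowingOperator ha0.le ha1 e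
  set z := ContractingWith.fixedPoint _ hΦ
  have hz : ‖z‖ ≤ r / (1 - a) := (h.norm_fixedPoint_shadowingOperator_le ha0.le ha1 e).trans
    (div_le_div_of_nonneg_right he (sub_nonneg.2 ha1.le))
  have hzstep := h.isFixedPt_shadowingOperator_iff.1 (hΦ.fixedPoint_isFixedPt)
  refine ⟨x 0 + z 0, fun n => ?_, fun y hy => ?_⟩
  · rw [ContinuousLinearEquiv.forall_zpow_apply_sub_eq_iff.2 ⟨hzstep, rfl⟩ n]
    exact (z.norm_coe_le_norm n).trans hz
  · let z' : BoundedContinuousFunction ℤ V :=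
      .ofNormedAddCommGroupDiscrete (fun n => (A ^ n) y - x n) _ hy
    obtain ⟨hz'step, hy0⟩ :=
      ContinuousLinearEquiv.forall_zpow_apply_sub_eq_iff.1 (fun n => (rfl : _ = z' n))
    rw [hy0, hΦ.fixedPoint_unique (h.isFixedPt_shadowingOperator_iff.2 hz'step)]

/-- Every `r`-pseudo orbit for a hyperbolic linear isomorphism `A` is `r/(1-a)`-shadowed
by a unique true orbit. -/
theorem shadowing_lemma
    {V : Type*} [NormedAddCommGroup V] [NormedSpace ℝ V] [FiniteDimensional ℝ V]
    (A : V ≃L[ℝ] V) (Ps Pu : V →L[ℝ] V) (a : ℝ) (ha0 : 0 < a) (ha1 : a < 1)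
    (hPs : ∀ x : V, Ps (Ps x) = Ps x) (hPu : ∀ x : V, Pu (Pu x) = Pu x)
    (hsum : ∀ x : V, Ps x + Pu x = x)
    (hAPs : ∀ x : V, A (Ps x) = Ps (A x)) (hAPu : ∀ x : V, A (Pu x) = Pu (A x))
    (hnorm : ∀ x : V, ‖x‖ = max ‖Ps x‖ ‖Pu x‖)
    (hcontr : ∀ x : V, ‖A (Ps x)‖ ≤ a * ‖Ps x‖)
    (hexpd : ∀ x : V, ‖A.symm (Pu x)‖ ≤ a * ‖Pu x‖)
    (r : ℝ) (hr : 0 < r) (x : ℤ → V) (hx : ∀ n : ℤ, ‖A (x n) - x (n + 1)‖ ≤ r) :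
    ∃! y : V, ∀ n : ℤ, ‖(A ^ n) y - x n‖ ≤ r / (1 - a) :=
  shadowing_lemma_general A Ps Pu a ha0 ha1 hPs hsum hAPs hAPu hnorm hcontr hexpd r x hx
end

section
/- If (x_n)_{n∈ℤ} is an r-pseudo orbit for A, then for every n ≥ 0 and every m ∈ ℤ one has ‖A^n x^s_m − x^s_{n+m}‖_s ≤ r/(1−a), where x^s denotes the E^s-component of x. -/
open MeasureTheory Filter Topology Set
open scoped ENNReal NNReal

open Samva

/-!
Along a pseudo orbit the stable error `eₙ = Aⁿ x_mˢ − x_{n+m}ˢ` obeys `‖eₙ₊₁‖ ≤ a‖eₙ‖ + r`,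
so it never exceeds `r / (1 - a)`, the fixed point of this recursion. To see this as a general
fact about contractions, note that `A ∘ Ps` is an `a`-Lipschitz self-map of the whole space,
its iterates agree with those of `A` on `E^s`, and `(x_kˢ)` is an `r`-pseudo orbit of it.
-/

theorem ContinuousLinearEquiv.coe_pow {R M : Type*} [Semiring R] [TopologicalSpace M]
    [AddCommMonoid M] [Module R M] (e : M ≃L[R] M) (n : ℕ) : ⇑(e ^ n) = e^[n] :=
  hom_coe_pow _ rfl (fun _ _ ↦ rfl) e n

theorem LipschitzWith.dist_iterate_le_of_pseudoOrbit {α : Type*} [PseudoMetricSpace α]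
    {K : ℝ≥0} {f : α → α} (hf : LipschitzWith K f) (hK : K < 1) {r : ℝ} {y : ℕ → α}
    (hy : ∀ n, dist (f (y n)) (y (n + 1)) ≤ r) (n : ℕ) :
    dist (f^[n] (y 0)) (y n) ≤ r / (1 - K) := by
  have hK' : (0 : ℝ) < 1 - K := sub_pos.2 (mod_cast hK)
  induction n with
  | zero =>
    rw [Function.iterate_zero_apply, dist_self]
    exact div_nonneg (dist_nonneg.trans (hy 0)) hK'.le
  | succ n ih =>
    calc dist (f^[n + 1] (y 0)) (y (n + 1))
        ≤ dist (f (f^[n] (y 0))) (f (y n)) + dist (f (y n)) (y (n + 1)) := by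
          rw [Function.iterate_succ_apply']
          exact dist_triangle _ _ _
      _ ≤ K * (r / (1 - K)) + r := add_le_add (hf.dist_le_mul_of_le ih) (hy n)
      _ = r / (1 - K) := by field_simp; ring

theorem stable_component_shadowing_general
    {V : Type*} [NormedAddCommGroup V] [NormedSpace ℝ V]
    (A : V ≃L[ℝ] V) (Ps Pu : V →L[ℝ] V) (a : ℝ) (ha0 : 0 < a) (ha1 : a < 1)
    (hPs : ∀ x : V, Ps (Ps x) = Ps x)
    (hAPs : ∀ x : V, A (Ps x) = Ps (A x))
    (hnorm : ∀ x : V, ‖x‖ = max ‖Ps x‖ ‖Pu x‖)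
    (hcontr : ∀ x : V, ‖A (Ps x)‖ ≤ a * ‖Ps x‖)
    (r : ℝ) (x : ℤ → V) (hx : ∀ n : ℤ, ‖A (x n) - x (n + 1)‖ ≤ r) :
    ∀ (n : ℕ) (m : ℤ), ‖(A ^ (n : ℤ)) (Ps (x m)) - Ps (x ((n : ℤ) + m))‖ ≤ r / (1 - a) := by
  have hPs_le : ∀ v, ‖Ps v‖ ≤ ‖v‖ := fun v ↦ (hnorm v).symm ▸ le_max_left _ _
  have hlip : LipschitzWith ⟨a, ha0.le⟩ (A ∘ Ps) := .of_dist_le_mul fun v w ↦ by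
    simp only [dist_eq_norm, Function.comp_apply, ← map_sub]
    exact (hcontr _).trans (mul_le_mul_of_nonneg_left (hPs_le _) ha0.le)
  have hsemi : Function.Semiconj Ps A (A ∘ Ps) := fun v ↦ by
    rw [Function.comp_apply, hPs, hAPs]
  have hiter (n : ℕ) (v : V) : (A ∘ Ps)^[n] (Ps v) = A^[n] (Ps v) := by
    rw [← hsemi.iterate_right n v, Function.Commute.iterate_left hAPs n v]
  have hpseudo (k : ℕ) (m : ℤ) :
      dist ((A ∘ Ps) (Ps (x (k + m)))) (Ps (x ((k + 1 : ℕ) + m))) ≤ r := by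
    rw [Function.comp_apply, hPs, hAPs, dist_eq_norm, ← map_sub,
      show ((k + 1 : ℕ) : ℤ) + m = k + m + 1 by push_cast; ring]
    exact (hPs_le _).trans (hx _)
  intro n m
  have hshadow := hlip.dist_iterate_le_of_pseudoOrbit ha1 (hpseudo · m) n
  rwa [hiter, Nat.cast_zero, zero_add, dist_eq_norm, ← ContinuousLinearEquiv.coe_pow,
    ← zpow_natCast] at hshadow

/-- For an `r`-pseudo orbit `(x_n)`, the stable components satisfy
`‖Aⁿ x_mˢ − x_{n+m}ˢ‖ ≤ r/(1−a)` for all `n ≥ 0` and `m ∈ ℤ`. -/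
theorem stable_component_shadowing
    {V : Type*} [NormedAddCommGroup V] [NormedSpace ℝ V] [FiniteDimensional ℝ V]
    (A : V ≃L[ℝ] V) (Ps Pu : V →L[ℝ] V) (a : ℝ) (ha0 : 0 < a) (ha1 : a < 1)
    (hPs : ∀ x : V, Ps (Ps x) = Ps x) (hPu : ∀ x : V, Pu (Pu x) = Pu x)
    (hsum : ∀ x : V, Ps x + Pu x = x)
    (hAPs : ∀ x : V, A (Ps x) = Ps (A x)) (hAPu : ∀ x : V, A (Pu x) = Pu (A x))
    (hnorm : ∀ x : V, ‖x‖ = max ‖Ps x‖ ‖Pu x‖)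
    (hcontr : ∀ x : V, ‖A (Ps x)‖ ≤ a * ‖Ps x‖)
    (hexpd : ∀ x : V, ‖A.symm (Pu x)‖ ≤ a * ‖Pu x‖)
    (r : ℝ) (hr : 0 < r) (x : ℤ → V) (hx : ∀ n : ℤ, ‖A (x n) - x (n + 1)‖ ≤ r) :
    ∀ (n : ℕ) (m : ℤ), ‖(A ^ (n : ℤ)) (Ps (x m)) - Ps (x ((n : ℤ) + m))‖ ≤ r / (1 - a) :=
  stable_component_shadowing_general A Ps Pu a ha0 ha1 hPs hAPs hnorm hcontr r x hx
end
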